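/- The coproduct ϖ on the tensor algebra of planar trees is coassociative: (ϖ ⊗ id) ∘ ϖ = (id ⊗ ϖ) ∘ ϖ on the span of non-degenerate planar trees. -/

import Mathlib

inductive PTree : Type
  | node : List PTree → PTree

namespace PTree

instance : Inhabited PTree := ⟨node []⟩

/-- the single-leaf tree ∘ -/
def leaf : PTree := node []

/-- number of leaves ‖b‖ -/
def leaves : PTree → ℕ
  | node ts => if ts.isEmpty then 1 else (ts.attach.map fun t => leaves t.1).sum
decreasing_by simp only [PTree.node.sizeOf_spec]; have := List.sizeOf_lt_of_mem t.2; omega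


/-- number of internal vertices |b| -/
def internals : PTree → ℕ
  | node ts => if ts.isEmpty then 0 else 1 + (ts.attach.map fun t => internals t.1).sum
decreasing_by simp only [PTree.node.sizeOf_spec]; have := List.sizeOf_lt_of_mem t.2; omega


/-- total number of vertices N(b) -/
def Ntot (b : PTree) : ℕ := b.leaves + b.internals

/-- non-degenerate: every internal vertex has at least two children -/
def ND : PTree → Prop
  | node ts => ts.isEmpty ∨ (2 ≤ ts.length ∧ ∀ t ∈ ts.attach, ND t.1)
decreasing_by simp only [PTree.node.sizeOf_spec]; have := List.sizeOf_lt_of_mem t.2; omega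


/-- the list of numbers of children of the internal vertices of b -/
def childCounts : PTree → List ℕ
  | node ts => if ts.isEmpty then [] else ts.length :: (ts.attach.map fun t => childCounts t.1).flatten
decreasing_by simp only [PTree.node.sizeOf_spec]; have := List.sizeOf_lt_of_mem t.2; omega


mutual
/-- graft trees from the list E onto the successive leaves of b (left to right);
returns the grafted tree together with the unused suffix of E. -/
def graft : PTree → List PTree → PTree × List PTree
  | node ts, E =>
    if ts.isEmpty then (E.headI, E.tail)
    else
      let p := graftL ts E
      (node p.1, p.2)
/-- graft trees from the list E onto the leaves of the forest l -/
def graftL : List PTree → List PTree → List PTree × List PTree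
  | [], E => ([], E)
  | t :: ts, E =>
    let p := graft t E
    let q := graftL ts p.2
    (p.1 :: q.1, q.2)
end

/-- E ∝ b : graft the tuple E onto the leaves of b -/
def graftT (b : PTree) (E : List PTree) : PTree := (b.graft E).1

mutual
/-- the list of all decompositions b = E ∝ c, as pairs (c, E) -/
def decomps : PTree → List (PTree × List PTree)
  | node ts =>
    (leaf, [node ts]) ::
      (if ts.isEmpty then []
       else (decompsL ts).map fun p => (node p.1, p.2))
/-- decompositions of a forest: pairs (list of bases, concatenated grafted tuples) -/
def decompsL : List PTree → List (List PTree × List PTree)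
  | [] => [([], [])]
  | t :: ts =>
    (decomps t).flatMap fun p => (decompsL ts).map fun q => (p.1 :: q.1, p.2 ++ q.2)
end

theorem leaves_pos : ∀ b : PTree, 0 < b.leaves
  | node ts => by
    show 0 < leaves (node ts)
    unfold leaves
    split
    · exact one_pos
    · rename_i h
      have hne : ts ≠ [] := by simpa [List.isEmpty_iff] using h
      obtain ⟨t, ts', rfl⟩ := List.exists_cons_of_ne_nil hne
      have := leaves_pos t
      simp only [List.attach_cons, List.map_cons, List.sum_cons]
      positivity

end PTree

open TensorProduct

/-- non-degenerate planar trees -/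
def NDTree := {b : PTree // b.ND}

/-- the tensor algebra ℱ over the span 𝒜 of non-degenerate planar trees -/
abbrev TA := TensorAlgebra ℝ (NDTree →₀ ℝ)

open scoped Classical in
/-- a non-degenerate planar tree seen as an element of ℱ -/
noncomputable def iotaT (t : PTree) : TA :=
  if h : t.ND then TensorAlgebra.ι ℝ (Finsupp.single (⟨t, h⟩ : NDTree) (1 : ℝ)) else 0

/-- the coproduct ϖ : ℱ → ℱ ⊗ ℱ, ϖ(b) = Σ_{E ∝ c = b} (E₁ • ⋯ • E_k) ⊗ c -/
noncomputable def cop : TA →ₐ[ℝ] TA ⊗[ℝ] TA :=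
  TensorAlgebra.lift ℝ
    ((Finsupp.lift (TA ⊗[ℝ] TA) ℝ NDTree) fun b =>
      ((PTree.decomps b.1).map fun p => ((p.2.map iotaT).prod) ⊗ₜ[ℝ] iotaT p.1).sum)

/-- B₋ : sends ∘ to 0 and B₊(b₁,…,b_m) to b₁ • ⋯ • b_m -/
noncomputable def Bminus : PTree → TA
  | PTree.node ts => if ts.isEmpty then 0 else (ts.map iotaT).prod

/-- isomorphism of rooted trees (forgetting the planar order) -/
def RIso : PTree → PTree → Prop
  | .node ts, .node ss =>
    ∃ e : Fin ts.length ≃ Fin ss.length, ∀ i : Fin ts.length, RIso (ts.get i) (ss.get (e i))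
termination_by b _ => sizeOf b
decreasing_by
  simp only [PTree.node.sizeOf_spec]
  have h : sizeOf (ts.get i) < sizeOf ts :=
    List.sizeOf_lt_of_mem (by exact ts.get_mem i)
  omega

open Matrix in
/-- the solution of −y′ = A*y with y(0) = y⁰ -/
noncomputable def adjSol {n : ℕ} (A : Matrix (Fin n) (Fin n) ℝ) (y0 : Fin n → ℝ) (t : ℝ) :
    Fin n → ℝ := (NormedSpace.exp ((-t) • Aᵀ)) *ᵥ y0



namespace PTree
theorem decompsL_nil : decompsL ([] : List PTree) = [([], [])] := by rw [decompsL]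

theorem decompsL_cons (t : PTree) (ts : List PTree) :
    decompsL (t :: ts) = (decomps t).flatMap fun p =>
      (decompsL ts).map fun q => (p.1 :: q.1, p.2 ++ q.2) := by rw [decompsL]

theorem decomps_def (ts : List PTree) :
    decomps (node ts) = (leaf, [node ts]) ::
      (if ts.isEmpty then [] else (decompsL ts).map fun p => (node p.1, p.2)) := by rw [decomps]

theorem ND_def (ts : List PTree) :
    ND (node ts) ↔ ts.isEmpty ∨ (2 ≤ ts.length ∧ ∀ t ∈ ts, ND t) := by
  rw [ND]
  refine or_congr Iff.rfl (and_congr Iff.rfl ⟨fun h t ht => h ⟨t, ht⟩ (List.mem_attach _ _), fun h x _ => h x.1 x.2⟩)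

theorem leaf_ND : ND leaf := by rw [leaf, ND]; left; rfl
end PTree
namespace PTree

theorem decompsL_length : ∀ (ts : List PTree), ∀ p ∈ decompsL ts, p.1.length = ts.length
  | [] => by simp [decompsL_nil]
  | t :: ts => by
    intro p hp
    rw [decompsL_cons] at hp
    simp only [List.mem_flatMap, List.mem_map] at hp
    obtain ⟨q, _, r, hr, rfl⟩ := hp
    simp [decompsL_length ts r hr]

theorem decompsL_append : ∀ (l₁ l₂ : List PTree),
    decompsL (l₁ ++ l₂) = (decompsL l₁).flatMap fun p =>
      (decompsL l₂).map fun q => (p.1 ++ q.1, p.2 ++ q.2)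
  | [], l₂ => by
    simp [decompsL_nil]
  | t :: l₁, l₂ => by
    rw [List.cons_append, decompsL_cons, decompsL_cons, decompsL_append l₁ l₂]
    simp [List.map_flatMap, List.flatMap_map, List.flatMap_assoc, List.map_map, Function.comp_def]

mutual
theorem decomps_ND : ∀ (b : PTree), b.ND → ∀ p ∈ decomps b, p.1.ND ∧ ∀ t ∈ p.2, t.ND
  | node ts, hb, p, hp => by
    rw [decomps_def] at hp
    rcases List.mem_cons.1 hp with rfl | hp
    · exact ⟨leaf_ND, by rintro t ht; simp at ht; subst ht; exact hb⟩
    · split at hp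
      · simp at hp
      · rename_i hne
        simp only [List.mem_map] at hp
        obtain ⟨q, hq, rfl⟩ := hp
        rcases (ND_def ts).1 hb with h | ⟨hlen, hall⟩
        · exact absurd h hne
        · obtain ⟨h1, h2⟩ := decompsL_ND ts hall q hq
          refine ⟨(ND_def q.1).2 (Or.inr ⟨?_, h1⟩), h2⟩
          rw [decompsL_length ts q hq]; exact hlen
  termination_by b => sizeOf b
  decreasing_by simp only [PTree.node.sizeOf_spec]; omega
theorem decompsL_ND : ∀ (ts : List PTree), (∀ t ∈ ts, t.ND) → ∀ p ∈ decompsL ts,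
    (∀ c ∈ p.1, c.ND) ∧ ∀ t ∈ p.2, t.ND
  | [], _, p, hp => by
    rw [decompsL_nil] at hp; simp at hp; simp [hp]
  | t :: ts, h, p, hp => by
    rw [decompsL_cons] at hp
    simp only [List.mem_flatMap, List.mem_map] at hp
    obtain ⟨q, hq, r, hr, rfl⟩ := hp
    obtain ⟨hq1, hq2⟩ := decomps_ND t (h t List.mem_cons_self) q hq
    obtain ⟨hr1, hr2⟩ := decompsL_ND ts (fun x hx => h x (List.mem_cons_of_mem t hx)) r hr
    constructor
    · intro c hc
      rcases List.mem_cons.1 hc with rfl | hc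
      · exact hq1
      · exact hr1 c hc
    · intro x hx
      rcases List.mem_append.1 hx with hx | hx
      · exact hq2 x hx
      · exact hr2 x hx
  termination_by ts => sizeOf ts
  decreasing_by all_goals (simp only [List.cons.sizeOf_spec]; omega)
end

end PTree
namespace PTree

/-- decompositions of a tree, as a multiset -/
def DT (b : PTree) : Multiset (PTree × List PTree) := ↑(decomps b)
/-- decompositions of a forest, as a multiset -/
def DF (ts : List PTree) : Multiset (List PTree × List PTree) := ↑(decompsL ts)

theorem DF_nil : DF [] = {([], [])} := by rw [DF, decompsL_nil]; rfl

theorem DF_cons (t : PTree) (ts : List PTree) :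
    DF (t :: ts) = (DT t).bind fun p => (DF ts).map fun q => (p.1 :: q.1, p.2 ++ q.2) := by
  rw [DF, decompsL_cons, DT]
  rw [← Multiset.coe_bind]
  congr 1

theorem DF_append (l₁ l₂ : List PTree) :
    DF (l₁ ++ l₂) = (DF l₁).bind fun p => (DF l₂).map fun q => (p.1 ++ q.1, p.2 ++ q.2) := by
  rw [DF, decompsL_append, DF, DF, ← Multiset.coe_bind]
  congr 1

theorem DT_node (ts : List PTree) :
    DT (node ts) = (leaf, [node ts]) ::ₘ
      (if ts.isEmpty then 0 else (DF ts).map fun p => (node p.1, p.2)) := by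
  rw [DT, decomps_def]
  split <;> rename_i h <;> simp [h, DF]

theorem DT_leaf : DT leaf = {(leaf, [leaf])} := by
  rw [leaf, DT_node]; simp [leaf]

theorem DF_single (b : PTree) : DF [b] = (DT b).map fun p => ([p.1], p.2) := by
  rw [DF_cons, DF_nil]
  simp

mutual
theorem key_tree : ∀ (b : PTree),
    ((DT b).bind fun p => (DF p.2).map fun q => (q.2, q.1, p.1))
      = (DT b).bind fun p => (DT p.1).map fun q => (p.2, q.2, q.1)
  | node ts => by
    by_cases hts : ts.isEmpty
    · obtain rfl : ts = [] := List.isEmpty_iff.1 hts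
      rw [DT_node]
      simp [DF_single, DT_node, DT_leaf]
    · have key := key_forest ts
      rw [DT_node, if_neg hts, Multiset.cons_bind, Multiset.cons_bind]
      have e1 : (DF ([node ts] : List PTree)).map
            (fun q => (q.2, q.1, ((leaf, [node ts]) : PTree × List PTree).1)) =
          ([node ts], [leaf], leaf) ::ₘ
            ((DF ts).map fun r => (r.2, [node r.1], (leaf : PTree))) := by
        rw [DF_single, DT_node, if_neg hts]
        simp [Multiset.map_map, Function.comp_def]
      have e2 : (DT ((leaf, [node ts]) : PTree × List PTree).1).map
            (fun q => (([node ts] : List PTree), q.2, q.1)) =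
          ({([node ts], [leaf], leaf)} : Multiset _) := by
        rw [DT_leaf]; rfl
      rw [e1, e2]
      have e3 : (((DF ts).map fun p => ((node p.1 : PTree), p.2)).bind
            fun p => (DF p.2).map fun q => (q.2, q.1, p.1)) =
          (DF ts).bind fun r => (DF r.2).map fun q => (q.2, q.1, node r.1) :=
        Multiset.bind_map _ _ _
      have e4 : (((DF ts).map fun p => ((node p.1 : PTree), p.2)).bind
            fun p => (DT p.1).map fun q => (p.2, q.2, q.1)) =
          (DF ts).bind fun r => (DT (node r.1)).map fun q => (r.2, q.2, q.1) :=
        Multiset.bind_map _ _ _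
      rw [e3, e4]
      have e5 : ((DF ts).bind fun r => (DT (node r.1)).map fun q => (r.2, q.2, q.1)) =
          (DF ts).bind fun r =>
            (r.2, [node r.1], leaf) ::ₘ ((DF r.1).map fun s => (r.2, s.2, node s.1)) := by
        refine Multiset.bind_congr fun r hr => ?_
        have hr' : r ∈ decompsL ts := by simpa [DF] using hr
        have hlen : r.1.length = ts.length := decompsL_length ts r hr'
        have hne : ¬ r.1.isEmpty := by
          have h0 : ts ≠ [] := fun h => hts (by simp [h])
          simp only [List.isEmpty_iff, ← List.length_eq_zero_iff, hlen]
          simpa [List.length_eq_zero_iff] using h0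
        rw [DT_node, if_neg hne, Multiset.map_cons, Multiset.map_map]
        rfl
      rw [e5, Multiset.bind_cons]
      have e6 : ((DF ts).bind fun r => (DF r.2).map fun q => (q.2, q.1, node r.1)) =
          (DF ts).bind fun r => (DF r.1).map fun s => (r.2, s.2, node s.1) := by
        have := congrArg (Multiset.map fun w : List PTree × List PTree × List PTree =>
          (w.1, w.2.1, node w.2.2)) key
        simpa only [Multiset.map_bind, Multiset.map_map, Function.comp_def] using this
      rw [e6]
      rw [Multiset.singleton_add, ← Multiset.cons_add]
  termination_by b => sizeOf b
  decreasing_by simp only [PTree.node.sizeOf_spec]; omega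

theorem key_forest : ∀ (ts : List PTree),
    ((DF ts).bind fun p => (DF p.2).map fun q => (q.2, q.1, p.1))
      = (DF ts).bind fun p => (DF p.1).map fun q => (p.2, q.2, q.1)
  | [] => by rw [DF_nil]; simp [DF_nil]
  | t :: ts => by
    have IH1 := key_tree t
    have IH2 := key_forest ts
    rw [DF_cons, Multiset.bind_assoc, Multiset.bind_assoc]
    simp only [Multiset.bind_map]
    calc
      ((DT t).bind fun p => (DF ts).bind fun r =>
          (DF (p.2 ++ r.2)).map fun q => (q.2, q.1, p.1 :: r.1))
        = (DT t).bind fun p => (DF ts).bind fun r => (DF p.2).bind fun q1 =>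
            (DF r.2).map fun q2 => (q1.2 ++ q2.2, q1.1 ++ q2.1, p.1 :: r.1) := by
          simp only [DF_append, Multiset.map_bind, Multiset.bind_assoc, Multiset.bind_map,
            Multiset.map_map, Function.comp_def]
      _ = (DT t).bind fun p => (DF p.2).bind fun q1 => (DF ts).bind fun r =>
            (DF r.2).map fun q2 => (q1.2 ++ q2.2, q1.1 ++ q2.1, p.1 :: r.1) :=
          Multiset.bind_congr fun p _ => Multiset.bind_bind _ _
      _ = (DT t).bind fun p => (DF p.2).bind fun q1 => (DF ts).bind fun r =>
            (DF r.1).map fun u => (q1.2 ++ r.2, q1.1 ++ u.2, p.1 :: u.1) := by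
          refine Multiset.bind_congr fun p _ => Multiset.bind_congr fun q1 _ => ?_
          have := congrArg (Multiset.map fun w : List PTree × List PTree × List PTree =>
            (q1.2 ++ w.1, q1.1 ++ w.2.1, p.1 :: w.2.2)) IH2
          simpa only [Multiset.map_bind, Multiset.map_map, Function.comp_def] using this
      _ = ((DT t).bind fun p => (DF p.2).map fun q => (q.2, q.1, p.1)).bind
            (fun w => (DF ts).bind fun r =>
              (DF r.1).map fun u => (w.1 ++ r.2, w.2.1 ++ u.2, w.2.2 :: u.1)) := by
          simp only [Multiset.bind_assoc, Multiset.bind_map]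
      _ = ((DT t).bind fun p => (DT p.1).map fun q => (p.2, q.2, q.1)).bind
            (fun w => (DF ts).bind fun r =>
              (DF r.1).map fun u => (w.1 ++ r.2, w.2.1 ++ u.2, w.2.2 :: u.1)) := by
          rw [IH1]
      _ = (DT t).bind fun p => (DT p.1).bind fun s => (DF ts).bind fun r =>
            (DF r.1).map fun u => (p.2 ++ r.2, s.2 ++ u.2, s.1 :: u.1) := by
          simp only [Multiset.bind_assoc, Multiset.bind_map]
      _ = (DT t).bind fun p => (DF ts).bind fun r => (DT p.1).bind fun s =>
            (DF r.1).map fun u => (p.2 ++ r.2, s.2 ++ u.2, s.1 :: u.1) :=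
          Multiset.bind_congr fun p _ => Multiset.bind_bind _ _
      _ = (DT t).bind fun p => (DF ts).bind fun r =>
            (DF (p.1 :: r.1)).map fun q => (p.2 ++ r.2, q.2, q.1) := by
          simp only [DF_cons, Multiset.map_bind, Multiset.bind_assoc, Multiset.bind_map,
            Multiset.map_map, Function.comp_def]
  termination_by ts => sizeOf ts
  decreasing_by all_goals (simp only [List.cons.sizeOf_spec]; omega)
end

end PTree
set_option synthInstance.maxHeartbeats 1000000
set_option maxHeartbeats 1600000
/-- ϖ(b) as an explicit sum over decompositions -/
noncomputable def phi (t : PTree) : TA ⊗[ℝ] TA :=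
  ((PTree.decomps t).map fun p => ((p.2.map iotaT).prod) ⊗ₜ[ℝ] iotaT p.1).sum

/-- the forest version of `phi` -/
noncomputable def phiL (ts : List PTree) : TA ⊗[ℝ] TA :=
  ((PTree.decompsL ts).map fun p => ((p.2.map iotaT).prod) ⊗ₜ[ℝ] ((p.1.map iotaT).prod)).sum

theorem phi_eq (t : PTree) :
    phi t = ((PTree.DT t).map fun p => ((p.2.map iotaT).prod) ⊗ₜ[ℝ] iotaT p.1).sum := by
  rw [PTree.DT, Multiset.map_coe, Multiset.sum_coe, phi]

theorem phiL_eq (ts : List PTree) :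
    phiL ts = ((PTree.DF ts).map fun p =>
      ((p.2.map iotaT).prod) ⊗ₜ[ℝ] ((p.1.map iotaT).prod)).sum := by
  rw [PTree.DF, Multiset.map_coe, Multiset.sum_coe, phiL]

theorem cop_iotaT (t : PTree) (h : t.ND) : cop (iotaT t) = phi t := by
  rw [iotaT, dif_pos h, cop, TensorAlgebra.lift_ι_apply]
  simp [Finsupp.lift_apply, Finsupp.sum_single_index, phi]
  refine (Finsupp.sum_single_index ?_).trans ?_ <;> simp

theorem phiL_nil : phiL [] = 1 := by
  rw [phiL, PTree.decompsL_nil]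
  simp [Algebra.TensorProduct.one_def]

theorem phiL_cons (t : PTree) (ts : List PTree) : phiL (t :: ts) = phi t * phiL ts := by
  rw [phiL_eq, phi_eq, phiL_eq, PTree.DF_cons]
  simp only [Multiset.map_bind, Multiset.map_map, Multiset.sum_bind, Function.comp_def]
  rw [← Multiset.sum_map_mul_right]
  refine congrArg Multiset.sum (Multiset.map_congr rfl fun p _ => ?_)
  rw [← Multiset.sum_map_mul_left]
  refine congrArg Multiset.sum (Multiset.map_congr rfl fun q _ => ?_)
  simp [List.map_append, List.prod_append, Algebra.TensorProduct.tmul_mul_tmul]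

theorem cop_prod : ∀ (ts : List PTree), (∀ t ∈ ts, t.ND) →
    cop ((ts.map iotaT).prod) = phiL ts
  | [], _ => by simp [phiL_nil]
  | t :: ts, h => by
    rw [List.map_cons, List.prod_cons, map_mul, cop_iotaT t (h t List.mem_cons_self),
      cop_prod ts (fun x hx => h x (List.mem_cons_of_mem t hx)), phiL_cons]

theorem sum_tmul_ms (s : Multiset (TA ⊗[ℝ] TA)) (x : TA) :
    s.sum ⊗ₜ[ℝ] x = (s.map fun y => y ⊗ₜ[ℝ] x).sum := by
  exact map_multiset_sum ((TensorProduct.mk ℝ (TA ⊗[ℝ] TA) TA).flip x) s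

theorem tmul_sum_ms (x : TA) (s : Multiset (TA ⊗[ℝ] TA)) :
    x ⊗ₜ[ℝ] s.sum = (s.map fun y => x ⊗ₜ[ℝ] y).sum := by
  exact map_multiset_sum (TensorProduct.mk ℝ TA (TA ⊗[ℝ] TA) x) s

/-- the triple-sum term -/
noncomputable def G3 (w : List PTree × List PTree × PTree) : TA ⊗[ℝ] (TA ⊗[ℝ] TA) :=
  ((w.1.map iotaT).prod) ⊗ₜ[ℝ] (((w.2.1.map iotaT).prod) ⊗ₜ[ℝ] iotaT w.2.2)

theorem core (t : PTree) (ht : t.ND) :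
    (Algebra.TensorProduct.assoc ℝ ℝ ℝ TA TA TA)
        ((Algebra.TensorProduct.map cop (AlgHom.id ℝ TA)) (phi t)) =
      (Algebra.TensorProduct.map (AlgHom.id ℝ TA) cop) (phi t) := by
  rw [phi_eq]
  rw [map_multiset_sum (Algebra.TensorProduct.map cop (AlgHom.id ℝ TA)), Multiset.map_map,
    map_multiset_sum (Algebra.TensorProduct.assoc ℝ ℝ ℝ TA TA TA), Multiset.map_map,
    map_multiset_sum (Algebra.TensorProduct.map (AlgHom.id ℝ TA) cop), Multiset.map_map]
  simp only [Multiset.map_map, Function.comp_def]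
  have lhs_eq :
      ((PTree.DT t).map fun p => (Algebra.TensorProduct.assoc ℝ ℝ ℝ TA TA TA)
        ((Algebra.TensorProduct.map cop (AlgHom.id ℝ TA))
          (((p.2.map iotaT).prod) ⊗ₜ[ℝ] iotaT p.1))).sum =
      (((PTree.DT t).bind fun p => (PTree.DF p.2).map fun q => (q.2, q.1, p.1)).map G3).sum := by
    simp only [Multiset.map_bind, Multiset.map_map, Multiset.sum_bind, Function.comp_def]
    refine congrArg Multiset.sum (Multiset.map_congr rfl fun p hp => ?_)
    have hp' : p ∈ PTree.decomps t := by simpa [PTree.DT] using hp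
    have hnd := (PTree.decomps_ND t ht p hp').2
    rw [Algebra.TensorProduct.map_tmul, AlgHom.coe_id, id_eq, cop_prod p.2 hnd, phiL_eq,
      sum_tmul_ms, map_multiset_sum (Algebra.TensorProduct.assoc ℝ ℝ ℝ TA TA TA)]
    simp only [Multiset.map_map, Function.comp_def]
    refine congrArg Multiset.sum (Multiset.map_congr rfl fun q _ => ?_)
    simp [G3, Algebra.TensorProduct.assoc_tmul]
  have rhs_eq :
      ((PTree.DT t).map fun p => (Algebra.TensorProduct.map (AlgHom.id ℝ TA) cop)
          (((p.2.map iotaT).prod) ⊗ₜ[ℝ] iotaT p.1)).sum =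
      (((PTree.DT t).bind fun p => (PTree.DT p.1).map fun q => (p.2, q.2, q.1)).map G3).sum := by
    simp only [Multiset.map_bind, Multiset.map_map, Multiset.sum_bind, Function.comp_def]
    refine congrArg Multiset.sum (Multiset.map_congr rfl fun p hp => ?_)
    have hp' : p ∈ PTree.decomps t := by simpa [PTree.DT] using hp
    have hnd := (PTree.decomps_ND t ht p hp').1
    rw [Algebra.TensorProduct.map_tmul, AlgHom.coe_id, id_eq, cop_iotaT p.1 hnd, phi_eq,
      tmul_sum_ms]
    simp only [Multiset.map_map, Function.comp_def]
    refine congrArg Multiset.sum (Multiset.map_congr rfl fun q _ => ?_)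
    simp [G3]
  rw [lhs_eq, rhs_eq, PTree.key_tree t]

/-- the coproduct ϖ is coassociative on the span of non-degenerate
planar trees: (ϖ ⊗ id) ∘ ϖ = (id ⊗ ϖ) ∘ ϖ. -/
theorem cop_coassoc (a : NDTree →₀ ℝ) :
    (Algebra.TensorProduct.assoc ℝ ℝ ℝ TA TA TA)
        ((Algebra.TensorProduct.map cop (AlgHom.id ℝ TA)) (cop (TensorAlgebra.ι ℝ a))) =
      (Algebra.TensorProduct.map (AlgHom.id ℝ TA) cop) (cop (TensorAlgebra.ι ℝ a)) := by
  induction a using Finsupp.induction_linear with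
  | zero => simp
  | add f g hf hg => simp only [map_add, hf, hg]
  | single b r =>
    have hb : (Finsupp.single b r : NDTree →₀ ℝ) = r • Finsupp.single b 1 := by
      rw [Finsupp.smul_single, smul_eq_mul, mul_one]
    rw [hb, map_smul, map_smul, map_smul, map_smul, map_smul]
    congr 1
    have hiota : TensorAlgebra.ι ℝ (Finsupp.single b (1:ℝ)) = iotaT b.1 := by
      rw [iotaT, dif_pos b.2]
      rfl
    rw [hiota, cop_iotaT b.1 b.2]
    exact core b.1 b.2
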